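/- arXiv:2310.09879 — 2 statements merged into one kernel-verified Lean document; each statement's English description precedes it below -/
import Mathlib

section
/- Let Ω be a finite set and let φ : Δ(Ω) → Δ(Ω) be a power-weighted distortion function with parameters ψ : Ω → ℝ₊₊ and α > 1. Then for every p ∈ Δ(Ω), the limit φ*(p) = lim_{n→∞} φ^n(p) exists; letting M = max_{ω∈Ω} p(ω)^{α−1}·ψ(ω) and S = {ω : p(ω)^{α−1}·ψ(ω) = M}, one has φ*(p)(ω) = ψ(ω)^{1/(1−α)} / Σ_{ω'∈S} ψ(ω')^{1/(1−α)} for ω ∈ S and φ*(p)(ω) = 0 otherwise. -/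
/-!
Writing `a(ω) = p(ω)^{α-1} ψ(ω)`, an induction shows that `φⁿ(p)` is the normalization of
`a(ω)^{αⁿ/(α-1)} · ψ(ω)^{1/(1-α)} = ψ(ω)^{(αⁿ-1)/(α-1)} p(ω)^{αⁿ}`. Dividing every weight by
`M^{αⁿ/(α-1)}`, where `M = max a`, leaves the normalization unchanged; since `αⁿ/(α-1) → ∞`, the
rescaled weights converge to `ψ(ω)^{1/(1-α)}` on the argmax set of `a` and to `0` off it.
-/

open Finset Filter Topology
open scoped Classical

/-- `p` is a probability distribution on the finite set `Ω`. -/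
def IsDist {Ω : Type*} [Fintype Ω] (p : Ω → ℝ) : Prop :=
  (∀ ω, 0 ≤ p ω) ∧ ∑ ω, p ω = 1

/-- `φ` is a power-weighted distorted belief with weights `ψ` and power `α`. -/
def IsPowerWeighted {Ω : Type*} [Fintype Ω] (φ : (Ω → ℝ) → Ω → ℝ)
    (ψ : Ω → ℝ) (α : ℝ) : Prop :=
  (∀ ω, 0 < ψ ω) ∧ 0 < α ∧
    ∀ p, IsDist p → ∀ ω, φ p ω = ψ ω * p ω ^ α / ∑ ω', ψ ω' * p ω' ^ α

noncomputable def normalized {Ω : Type*} [Fintype Ω] (f : Ω → ℝ) : Ω → ℝ :=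
  fun ω => f ω / ∑ ω', f ω'

section Normalized

variable {Ω : Type*} [Fintype Ω]

lemma normalized_smul (f : Ω → ℝ) {c : ℝ} (hc : c ≠ 0) : normalized (c • f) = normalized f := by
  ext ω
  simp only [normalized, Pi.smul_apply, smul_eq_mul, ← Finset.mul_sum, mul_div_mul_left _ _ hc]

lemma isDist_normalized {f : Ω → ℝ} (hf : ∀ ω, 0 ≤ f ω) (hs : 0 < ∑ ω, f ω) :
    IsDist (normalized f) :=
  ⟨fun ω => div_nonneg (hf ω) hs.le, by simp only [normalized, ← Finset.sum_div, div_self hs.ne']⟩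

lemma normalized_of_isDist {p : Ω → ℝ} (hp : IsDist p) : normalized p = p := by
  ext ω
  simp [normalized, hp.2]

lemma IsDist.exists_pos {p : Ω → ℝ} (hp : IsDist p) : ∃ ω, 0 < p ω := by
  obtain ⟨ω, -, h⟩ := Finset.exists_lt_of_sum_lt (s := Finset.univ) (f := 0) (g := p)
    (by simp [hp.2])
  exact ⟨ω, h⟩

lemma tendsto_normalized {ι : Type*} {l : Filter ι} {f : ι → Ω → ℝ} {g : Ω → ℝ}
    (hf : ∀ ω, Tendsto (fun i => f i ω) l (𝓝 (g ω))) (hg : ∑ ω, g ω ≠ 0) (ω : Ω) :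
    Tendsto (fun i => normalized (f i) ω) l (𝓝 (normalized g ω)) :=
  (hf ω).div (tendsto_finsetSum _ fun ω _ => hf ω) hg

end Normalized

lemma tendsto_rpow_of_nonneg_of_le_one {ι : Type*} {l : Filter ι} {t : ι → ℝ}
    (ht : Tendsto t l atTop) {x : ℝ} (h0 : 0 ≤ x) (h1 : x ≤ 1) :
    Tendsto (fun i => x ^ t i) l (𝓝 (if x = 1 then 1 else 0)) := by
  split_ifs with hx
  · simpa [hx] using tendsto_const_nhds
  · exact (tendsto_rpow_atTop_of_base_lt_one x (by linarith) (lt_of_le_of_ne h1 hx)).comp ht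

lemma tendsto_normalized_rpow_mul {Ω ι : Type*} [Fintype Ω] {l : Filter ι} {t : ι → ℝ}
    (ht : Tendsto t l atTop) {a c : Ω → ℝ} (ha : ∀ ω, 0 ≤ a ω) (hpos : ∃ ω, 0 < a ω)
    (hc : ∀ ω, 0 < c ω) (ω : Ω) :
    Tendsto (fun i => normalized (fun ω' => a ω' ^ t i * c ω') ω) l
      (𝓝 (normalized (fun ω' => if ∀ ω'', a ω'' ≤ a ω' then c ω' else 0) ω)) := by
  have : Nonempty Ω := ⟨ω⟩
  obtain ⟨ω₀, hmax⟩ := Finite.exists_max a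
  have hM : 0 < a ω₀ := let ⟨ω₁, h⟩ := hpos; h.trans_le (hmax ω₁)
  have hscale : ∀ i, normalized (fun ω' => a ω' ^ t i * c ω') =
      normalized (fun ω' => (a ω' / a ω₀) ^ t i * c ω') := by
    intro i
    rw [← normalized_smul (fun ω' => (a ω' / a ω₀) ^ t i * c ω')
      (Real.rpow_pos_of_pos hM (t i)).ne']
    congr 1
    ext ω'
    simp only [Pi.smul_apply, smul_eq_mul, Real.div_rpow (ha ω') hM.le]
    field_simp
  have hargmax : ∀ ω', a ω' / a ω₀ = 1 ↔ ∀ ω'', a ω'' ≤ a ω' := fun ω' => by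
    rw [div_eq_one_iff_eq hM.ne']
    exact ⟨fun h ω'' => h ▸ hmax ω'', fun h => le_antisymm (hmax ω') (h ω₀)⟩
  simp only [hscale]
  refine tendsto_normalized (fun ω' => ?_) (Finset.sum_pos' (fun ω' _ => ?_) ⟨ω₀, ?_⟩).ne' ω
  · have := (tendsto_rpow_of_nonneg_of_le_one ht (div_nonneg (ha ω') hM.le)
      ((div_le_one hM).2 (hmax ω'))).mul_const (c ω')
    simpa only [hargmax, ite_mul, one_mul, zero_mul] using this
  · split_ifs
    exacts [(hc ω').le, le_rfl]
  · simpa [fun ω'' => hmax ω''] using hc ω₀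

noncomputable def iterateWeight {Ω : Type*} (p ψ : Ω → ℝ) (α : ℝ) (n : ℕ) (ω : Ω) : ℝ :=
  (p ω ^ (α - 1) * ψ ω) ^ (α ^ n / (α - 1)) * ψ ω ^ (1 / (1 - α))

section IterateWeight

variable {Ω : Type*} {p ψ : Ω → ℝ} {α : ℝ}

lemma iterateWeight_nonneg (hψ : ∀ ω, 0 < ψ ω) (hp : ∀ ω, 0 ≤ p ω) (n : ℕ) (ω : Ω) :
    0 ≤ iterateWeight p ψ α n ω := by
  unfold iterateWeight
  have := hψ ω
  have := hp ω
  positivity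

lemma iterateWeight_pos (hψ : ∀ ω, 0 < ψ ω) {ω : Ω} (hp : 0 < p ω) (n : ℕ) :
    0 < iterateWeight p ψ α n ω := by
  unfold iterateWeight
  have := hψ ω
  positivity

lemma iterateWeight_zero (hψ : ∀ ω, 0 < ψ ω) (hp : ∀ ω, 0 ≤ p ω) (hα : α ≠ 1) :
    iterateWeight p ψ α 0 = p := by
  have hα' : α - 1 ≠ 0 := sub_ne_zero.2 hα
  ext ω
  rw [iterateWeight, pow_zero, Real.mul_rpow (Real.rpow_nonneg (hp ω) _) (hψ ω).le,
    ← Real.rpow_mul (hp ω), mul_one_div_cancel hα', Real.rpow_one, mul_assoc,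
    ← Real.rpow_add (hψ ω)]
  have : 1 / (α - 1) + 1 / (1 - α) = 0 := by
    rw [← neg_sub α 1, div_neg, add_neg_cancel]
  rw [this, Real.rpow_zero, mul_one]

lemma mul_rpow_iterateWeight (hψ : ∀ ω, 0 < ψ ω) (hp : ∀ ω, 0 ≤ p ω) (hα : α ≠ 1) (n : ℕ)
    (ω : Ω) : ψ ω * iterateWeight p ψ α n ω ^ α = iterateWeight p ψ α (n + 1) ω := by
  have hα' : 1 - α ≠ 0 := sub_ne_zero.2 hα.symm
  have ha : 0 ≤ p ω ^ (α - 1) * ψ ω := mul_nonneg (Real.rpow_nonneg (hp ω) _) (hψ ω).le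
  rw [iterateWeight, iterateWeight, Real.mul_rpow (Real.rpow_nonneg ha _)
    (Real.rpow_nonneg (hψ ω).le _), ← Real.rpow_mul ha, ← Real.rpow_mul (hψ ω).le, mul_left_comm,
    ← Real.rpow_one_add' (hψ ω).le]
  · congr 2
    · rw [pow_succ]; ring
    · field_simp; ring
  · field_simp
    simpa [sub_eq_zero, eq_comm] using hα'

end IterateWeight

section PowerWeighted

variable {Ω : Type*} [Fintype Ω] {φ : (Ω → ℝ) → Ω → ℝ} {ψ : Ω → ℝ} {α : ℝ}

lemma IsPowerWeighted.apply_normalized (hpw : IsPowerWeighted φ ψ α) {f : Ω → ℝ}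
    (hf : ∀ ω, 0 ≤ f ω) (hs : 0 < ∑ ω, f ω) :
    φ (normalized f) = normalized (fun ω => ψ ω * f ω ^ α) := by
  have hscale : (fun ω => ψ ω * normalized f ω ^ α) =
      ((∑ ω, f ω) ^ α)⁻¹ • fun ω => ψ ω * f ω ^ α := by
    ext ω
    simp only [normalized, Real.div_rpow (hf ω) hs.le, Pi.smul_apply, smul_eq_mul]
    ring
  ext ω
  rw [hpw.2.2 _ (isDist_normalized hf hs),
    ← normalized_smul (fun ω => ψ ω * f ω ^ α) (inv_ne_zero (Real.rpow_pos_of_pos hs α).ne'),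
    ← hscale]
  rfl

lemma IsPowerWeighted.iterate_eq (hpw : IsPowerWeighted φ ψ α) (hα : 1 < α) {p : Ω → ℝ}
    (hp : IsDist p) (n : ℕ) : φ^[n] p = normalized (iterateWeight p ψ α n) := by
  have hψ := hpw.1
  induction n with
  | zero =>
    rw [Function.iterate_zero_apply, iterateWeight_zero hψ hp.1 hα.ne', normalized_of_isDist hp]
  | succ n ih =>
    obtain ⟨ω₁, hω₁⟩ := hp.exists_pos
    have hpos : 0 < ∑ ω, iterateWeight p ψ α n ω :=
      Finset.sum_pos' (fun ω _ => iterateWeight_nonneg hψ hp.1 n ω)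
        ⟨ω₁, Finset.mem_univ _, iterateWeight_pos hψ hω₁ n⟩
    rw [Function.iterate_succ_apply', ih,
      hpw.apply_normalized (iterateWeight_nonneg hψ hp.1 n) hpos]
    simp only [mul_rpow_iterateWeight hψ hp.1 hα.ne']

end PowerWeighted

/-- **Limit beliefs for `α > 1`**: the iterates `φⁿ(p)` converge pointwise; with
`S = {ω : p(ω)^{α−1}·ψ(ω) maximal}`, the limit is proportional to `ψ(ω)^{1/(1−α)}` on
`S` and `0` elsewhere (with the convention `0^{α−1} = 0`). -/
theorem stmt18 {Ω : Type*} [Fintype Ω]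
    (φ : (Ω → ℝ) → Ω → ℝ) (ψ : Ω → ℝ) (α : ℝ)
    (hpw : IsPowerWeighted φ ψ α) (hα : 1 < α) :
    ∀ p, IsDist p → ∀ ω : Ω,
      ((∀ ω', p ω' ^ (α - 1) * ψ ω' ≤ p ω ^ (α - 1) * ψ ω) →
        Tendsto (fun n => φ^[n] p ω) atTop
          (𝓝 (ψ ω ^ (1 / (1 - α)) /
            ∑ ω' ∈ Finset.univ.filter
              (fun ω' => ∀ ω'', p ω'' ^ (α - 1) * ψ ω'' ≤ p ω' ^ (α - 1) * ψ ω'),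
              ψ ω' ^ (1 / (1 - α))))) ∧
      (¬(∀ ω', p ω' ^ (α - 1) * ψ ω' ≤ p ω ^ (α - 1) * ψ ω) →
        Tendsto (fun n => φ^[n] p ω) atTop (𝓝 0)) := by
  intro p hp ω
  have hψ := hpw.1
  obtain ⟨ω₁, hω₁⟩ := hp.exists_pos
  have ht : Tendsto (fun n : ℕ => α ^ n / (α - 1)) atTop atTop :=
    (tendsto_pow_atTop_atTop_of_one_lt hα).atTop_div_const (by linarith)
  have hlim := tendsto_normalized_rpow_mul ht (a := fun ω' => p ω' ^ (α - 1) * ψ ω')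
    (fun ω' => mul_nonneg (Real.rpow_nonneg (hp.1 ω') _) (hψ ω').le)
    ⟨ω₁, mul_pos (Real.rpow_pos_of_pos hω₁ _) (hψ ω₁)⟩
    (fun ω' => Real.rpow_pos_of_pos (hψ ω') (1 / (1 - α))) ω
  simp only [hpw.iterate_eq hα hp]
  constructor
  · intro h
    simpa [normalized, iterateWeight, h, Finset.sum_filter] using hlim
  · intro h
    simpa [normalized, iterateWeight, h] using hlim
end

section
/- Let Ω be a finite set and let φ : Δ(Ω) → Δ(Ω) be a positive and coherent distorted belief. Then for any two distinct states ω₁, ω₂ ∈ Ω and any p, p' ∈ Δ(Ω) with p(ω₁), p(ω₂), p'(ω₁), p'(ω₂) all positive, if p(ω₁)/p(ω₂) = p'(ω₁)/p'(ω₂), then φ(p)(ω₁)/φ(p)(ω₂) = φ(p')(ω₁)/φ(p')(ω₂). In particular, the ratio φ(p)(ω₁)/φ(p)(ω₂) depends only on the likelihood ratio p(ω₁)/p(ω₂). -/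
open Finset

/-- The conditional distribution `p(·|E)` of `p` given the event `E`. -/
noncomputable def condOn {Ω : Type*} [Fintype Ω] [DecidableEq Ω]
    (p : Ω → ℝ) (E : Finset Ω) : Ω → ℝ :=
  fun ω => if ω ∈ E then p ω / ∑ ω' ∈ E, p ω' else 0

/-- A distorted belief is positive if `φ(p)(E) = 0` iff `p(E) = 0`. -/
def PositiveBelief {Ω : Type*} [Fintype Ω] (φ : (Ω → ℝ) → Ω → ℝ) : Prop :=
  ∀ p, IsDist p → ∀ E : Finset Ω, (∑ ω ∈ E, φ p ω = 0 ↔ ∑ ω ∈ E, p ω = 0)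

/-- A distorted belief is coherent if distortion commutes with conditioning. -/
def CoherentBelief {Ω : Type*} [Fintype Ω] [DecidableEq Ω] (φ : (Ω → ℝ) → Ω → ℝ) : Prop :=
  ∀ p, IsDist p → ∀ E : Finset Ω, 0 < ∑ ω ∈ E, p ω →
    φ (condOn p E) = condOn (φ p) E

/-- For a positive and coherent distorted belief, the distorted likelihood ratio of two
distinct states depends only on the original likelihood ratio of those states. -/
theorem stmt19 {Ω : Type*} [Fintype Ω] [DecidableEq Ω]
    (φ : (Ω → ℝ) → Ω → ℝ)
    (hmap : ∀ p, IsDist p → IsDist (φ p))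
    (hpos : PositiveBelief φ) (hcoh : CoherentBelief φ) :
    ∀ ω₁ ω₂ : Ω, ω₁ ≠ ω₂ → ∀ p p' : Ω → ℝ, IsDist p → IsDist p' →
      0 < p ω₁ → 0 < p ω₂ → 0 < p' ω₁ → 0 < p' ω₂ →
      p ω₁ / p ω₂ = p' ω₁ / p' ω₂ →
      φ p ω₁ / φ p ω₂ = φ p' ω₁ / φ p' ω₂ := by
  intro ω₁ ω₂ hne p p' hp hp' h1 h2 h1' h2' hratio
  -- positivity of φ at single points
  have hphipos : ∀ q : Ω → ℝ, IsDist q → ∀ ω, 0 < q ω → 0 < φ q ω := by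
    intro q hq ω hω
    have h := (hpos q hq {ω}).not
    simp only [Finset.sum_singleton] at h
    have hne0 : φ q ω ≠ 0 := h.mpr (ne_of_gt hω)
    exact lt_of_le_of_ne ((hmap q hq).1 ω) (Ne.symm hne0)
  set E : Finset Ω := {ω₁, ω₂} with hE
  have hmem1 : ω₁ ∈ E := by simp [hE]
  have hmem2 : ω₂ ∈ E := by simp [hE]
  have hsum : ∀ q : Ω → ℝ, ∑ ω ∈ E, q ω = q ω₁ + q ω₂ := fun q => Finset.sum_pair hne
  have hcross : p ω₁ * p' ω₂ = p' ω₁ * p ω₂ := by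
    field_simp at hratio; linarith
  -- conditional distributions agree
  have hcondeq : condOn p E = condOn p' E := by
    funext ω
    unfold condOn
    by_cases hω : ω ∈ E
    · simp only [hω, if_true, hsum]
      rcases Finset.mem_insert.mp hω with rfl | hω2
      · rw [div_eq_div_iff (by positivity) (by positivity)]; ring_nf; nlinarith [hcross]
      · have : ω = ω₂ := Finset.mem_singleton.mp hω2
        subst this
        rw [div_eq_div_iff (by positivity) (by positivity)]; nlinarith [hcross]
    · simp [hω]
  have hpE : 0 < ∑ ω ∈ E, p ω := by rw [hsum]; linarith
  have hpE' : 0 < ∑ ω ∈ E, p' ω := by rw [hsum]; linarith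
  have key : condOn (φ p) E = condOn (φ p') E := by
    rw [← hcoh p hp E hpE, ← hcoh p' hp' E hpE', hcondeq]
  have k1 := congrFun key ω₁
  have k2 := congrFun key ω₂
  unfold condOn at k1 k2
  simp only [hmem1, hmem2, if_true, hsum] at k1 k2
  have S1 : 0 < φ p ω₁ + φ p ω₂ :=
    add_pos (hphipos p hp ω₁ h1) (hphipos p hp ω₂ h2)
  have S2 : 0 < φ p' ω₁ + φ p' ω₂ :=
    add_pos (hphipos p' hp' ω₁ h1') (hphipos p' hp' ω₂ h2')
  have f2 : 0 < φ p ω₂ := hphipos p hp ω₂ h2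
  have f2' : 0 < φ p' ω₂ := hphipos p' hp' ω₂ h2'
  rw [div_eq_div_iff (ne_of_gt f2) (ne_of_gt f2')]
  rw [div_eq_div_iff (by positivity) (by positivity)] at k1 k2
  nlinarith [k1, k2, mul_pos f2 f2']
end
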